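/- arXiv:1812.04779 — 7 statements merged into one kernel-verified Lean document; each statement's English description precedes it below -/
import Mathlib

section
/- Let R be a ring with central element z, and let T, X₁, X₂ ∈ R satisfy X₁X₂ = X₂X₁, T² = zT + 1, T·X₁·T = X₂, and suppose X₁ and X₂ are units. Then for every integer a ≥ 1, T·X₁⁻ᵃ = X₂⁻ᵃ·T + z·∑_{b=0}^{a−1} X₂⁻ᵇ·X₁^{b−a}. -/
/-!
Multiplying `τ x₁ τ = x₂` on the right by `τ` and using `τ² = zτ + 1` gives the dot-slide relation
`x₂ τ = τ x₁ + z x₂`; multiplying by `x₂⁻¹` on the left and `x₁⁻¹` on the right turns it into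
`τ x₁⁻¹ = x₂⁻¹ τ + z x₁⁻¹`. A relation `t x = y t + w` iterates to
`t xⁿ = yⁿ t + ∑_{b<n} yᵇ w xⁿ⁻¹⁻ᵇ`, which for `x = x₁⁻¹`, `y = x₂⁻¹`, `w = z x₁⁻¹` is the formula.
-/

theorem mul_pow_eq_pow_mul_add_sum {R : Type*} [Semiring R] {t x y w : R}
    (h : t * x = y * t + w) (n : ℕ) :
    t * x ^ n = y ^ n * t + ∑ b ∈ Finset.range n, y ^ b * w * x ^ (n - 1 - b) := by
  induction n with
  | zero => simp
  | succ n ih =>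
    have hshift : ∑ b ∈ Finset.range n, y ^ b * w * x ^ (n - b)
        = (∑ b ∈ Finset.range n, y ^ b * w * x ^ (n - 1 - b)) * x := by
      rw [Finset.sum_mul]
      refine Finset.sum_congr rfl fun b hb => ?_
      rw [mul_assoc (y ^ b * w), ← pow_succ]
      congr 2
      grind
    calc t * x ^ (n + 1) = (y ^ n * t + ∑ b ∈ Finset.range n, y ^ b * w * x ^ (n - 1 - b)) * x := by
          rw [pow_succ, ← mul_assoc, ih]
      _ = y ^ n * (y * t + w) + (∑ b ∈ Finset.range n, y ^ b * w * x ^ (n - 1 - b)) * x := by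
          rw [add_mul, mul_assoc, h]
      _ = _ := by
          rw [Finset.sum_range_succ, ← hshift]
          simp only [Nat.add_sub_cancel, Nat.sub_self, pow_zero, mul_one, mul_add, pow_succ, mul_assoc]
          abel

theorem Units.mul_inv_eq_inv_mul_add {R : Type*} [Semiring R] {u v : Rˣ} {t w : R}
    (h : v * t = t * u + w) : t * ↑u⁻¹ = ↑v⁻¹ * t + ↑v⁻¹ * w * ↑u⁻¹ := by
  calc t * ↑u⁻¹ = ↑v⁻¹ * (v * t) * ↑u⁻¹ := by rw [← mul_assoc, Units.inv_mul, one_mul]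
    _ = _ := by
      rw [h, mul_add, add_mul]
      simp only [mul_assoc, Units.mul_inv, mul_one]

theorem mul_eq_mul_add_of_mul_mul_eq {R : Type*} [Semiring R] {z t x y : R}
    (hz : Commute z (t * x)) (ht : t * t = z * t + 1) (htxt : t * x * t = y) :
    y * t = t * x + z * y := by
  calc y * t = t * x * (t * t) := by rw [← htxt, mul_assoc]
    _ = z * (t * x * t) + t * x := by rw [ht, mul_add, mul_one, ← mul_assoc, ← hz.eq, mul_assoc]
    _ = t * x + z * y := by rw [htxt, add_comm]

theorem Units.val_zpow_neg_natCast {R : Type*} [Monoid R] (u : Rˣ) (n : ℕ) :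
    ((u ^ (-(n : ℤ)) : Rˣ) : R) = (↑u⁻¹ : R) ^ n := by
  rw [zpow_neg, zpow_natCast, ← inv_pow, Units.val_pow_eq_pow_val]

theorem stmt_2_general (R : Type*) [Ring R] (z T : R) (X₁ X₂ : Rˣ) (hz : ∀ r : R, Commute z r)
    (hT : T * T = z * T + 1) (hTXT : T * (X₁ : R) * T = (X₂ : R))
    (a : ℕ) :
    T * ((X₁ ^ (-(a : ℤ)) : Rˣ) : R)
      = ((X₂ ^ (-(a : ℤ)) : Rˣ) : R) * T
        + z * ∑ b ∈ Finset.range a,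
            ((X₂ ^ (-(b : ℤ)) : Rˣ) : R) * ((X₁ ^ ((b : ℤ) - (a : ℤ)) : Rˣ) : R) := by
  have hslide : (X₂ : R) * T = T * X₁ + z * X₂ := mul_eq_mul_add_of_mul_mul_eq (hz _) hT hTXT
  have hinv : T * ↑X₁⁻¹ = ↑X₂⁻¹ * T + z * ↑X₁⁻¹ := by
    rw [Units.mul_inv_eq_inv_mul_add hslide, ← (hz _).left_comm, Units.inv_mul, mul_one]
  rw [Units.val_zpow_neg_natCast, Units.val_zpow_neg_natCast, mul_pow_eq_pow_mul_add_sum hinv,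
    Finset.mul_sum]
  congr 1
  refine Finset.sum_congr rfl fun b hb => ?_
  have hab : a - b = a - 1 - b + 1 := by grind
  rw [show (b : ℤ) - a = -((a - b : ℕ) : ℤ) by grind, Units.val_zpow_neg_natCast,
    Units.val_zpow_neg_natCast, hab, pow_succ', ← (hz _).left_comm]
  simp only [mul_assoc]

/-- Let `R` be a ring with central element `z`, and let `T, X₁, X₂ ∈ R` satisfy
`X₁X₂ = X₂X₁`, `T² = zT + 1`, `T·X₁·T = X₂`, and suppose `X₁` and `X₂` are units. Then for
every integer `a ≥ 1`, `T·X₁⁻ᵃ = X₂⁻ᵃ·T + z·∑_{b=0}^{a−1} X₂⁻ᵇ·X₁^{b−a}`.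
(The invertible elements `X₁, X₂` are modeled as units of `R`, with integer powers given by
`zpow` on units.) -/
theorem stmt_2 (R : Type*) [Ring R] (z T : R) (X₁ X₂ : Rˣ) (hz : ∀ r : R, Commute z r)
    (hcomm : (X₁ : R) * (X₂ : R) = (X₂ : R) * (X₁ : R))
    (hT : T * T = z * T + 1) (hTXT : T * (X₁ : R) * T = (X₂ : R))
    (a : ℕ) (ha : 1 ≤ a) :
    T * ((X₁ ^ (-(a : ℤ)) : Rˣ) : R)
      = ((X₂ ^ (-(a : ℤ)) : Rˣ) : R) * T
        + z * ∑ b ∈ Finset.range a,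
            ((X₂ ^ (-(b : ℤ)) : Rˣ) : R) * ((X₁ ^ ((b : ℤ) - (a : ℤ)) : Rˣ) : R) :=
  stmt_2_general R z T X₁ X₂ hz hT hTXT a
end

section
/- Let K be an algebraically closed field, q ∈ K with q ≠ 0 and q² ≠ 1, and set z = q − q⁻¹. Let V be a nonzero finite-dimensional K-vector space and X₁, X₂, T ∈ End(V) with X₁∘X₂ = X₂∘X₁, T∘X₁∘T = X₂, and T∘T = z·T + id. Then every eigenvalue of X₂ on V is of the form λ, q²λ, or q⁻²λ for some eigenvalue λ of X₁ on V. -/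
/-! Take a common eigenvector `v` of the commuting operators `X₁` and `X₂`, with
`X₁ v = λ v` and `X₂ v = μ v`. Applying `T` to `T X₁ T v = μ v` and using the quadratic relation
gives `X₁ (T v) = μ T v - zμ v`, so `X₁` preserves the span of `v` and `T v`. If `T v` is not a
multiple of `v`, then `μ` is the second eigenvalue of `X₁` on that plane. If `T v = c v`, then
`c` is a root of `t² - z t - 1 = (t - q)(t + q⁻¹)` and `μ v = T X₁ T v = c² λ v`. -/

open Module End

theorem Module.End.exists_hasEigenvector_of_commute {K V : Type*} [Field K] [IsAlgClosed K]
    [AddCommGroup V] [Module K V] [FiniteDimensional K V] {f g : End K V} (h : Commute f g)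
    {μ : K} (hμ : g.HasEigenvalue μ) :
    ∃ lam : K, ∃ v : V, f.HasEigenvector lam v ∧ g.HasEigenvector μ v := by
  have hinv : ∀ x ∈ g.eigenspace μ, f x ∈ g.eigenspace μ := fun x hx =>
    mapsTo_genEigenspace_of_comm h.symm μ 1 hx
  have : Nontrivial (g.eigenspace μ) := Submodule.nontrivial_iff_ne_bot.mpr hμ
  obtain ⟨lam, hlam⟩ := exists_eigenvalue (f.restrict hinv)
  obtain ⟨v, hv⟩ := hlam.exists_hasEigenvector
  refine ⟨lam, v, ⟨eigenspace_restrict_le_eigenspace f hinv lam ⟨v, hv.1, rfl⟩, ?_⟩, v.2, ?_⟩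
  all_goals simpa using hv.2

section

variable {K V : Type*} [Field K] [AddCommGroup V] [Module K V] {X₁ X₂ T : End K V} {v w : V}
  {z lam μ a c : K}

theorem Module.End.hasEigenvalue_or_exists_eq_smul (hv : X₁ v = lam • v)
    (hw : X₁ w = μ • w - a • v) (hne : μ ≠ lam) :
    X₁.HasEigenvalue μ ∨ ∃ c : K, w = c • v := by
  set c := a / (μ - lam)
  have hc : c * (μ - lam) = a := div_mul_cancel₀ _ (sub_ne_zero.mpr hne)
  by_cases hw' : w - c • v = 0
  · exact Or.inr ⟨c, sub_eq_zero.mp hw'⟩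
  refine Or.inl (hasEigenvalue_of_hasEigenvector ⟨mem_eigenspace_iff.mpr ?_, hw'⟩)
  rw [map_sub, map_smul, hv, hw, ← hc]
  module

theorem apply_apply_eq_of_hecke (h1 : T * X₁ * T = X₂) (h2 : T * T = z • T + 1)
    (hv : X₂ v = μ • v) : X₁ (T v) = μ • T v - (z * μ) • v := by
  have h := congr($h2 (X₁ (T v)))
  have h1v : T (X₁ (T v)) = μ • v := by rw [← hv, ← h1]; rfl
  simp only [mul_apply, LinearMap.add_apply, LinearMap.smul_apply, one_apply, h1v, map_smul] at h
  rw [h, mul_smul]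
  abel

theorem mul_self_eq_of_apply_eq_smul (h2 : T * T = z • T + 1) (hv : v ≠ 0)
    (hTv : T v = c • v) : c * c = z * c + 1 := by
  apply smul_left_injective K hv
  have h := congr($h2 v)
  simp only [mul_apply, LinearMap.add_apply, LinearMap.smul_apply, one_apply, hTv, map_smul] at h
  simp only [add_smul, one_smul, mul_smul, h]

theorem eq_sq_mul_of_apply_eq_smul (h1 : T * X₁ * T = X₂) (hv : v ≠ 0) (hTv : T v = c • v)
    (hX₁ : X₁ v = lam • v) (hX₂ : X₂ v = μ • v) : μ = c ^ 2 * lam := by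
  apply smul_left_injective K hv
  have h := congr($h1 v)
  simp only [mul_apply, hTv, map_smul, hX₁, hX₂] at h
  simp only [← h, smul_smul]
  ring_nf

end

theorem eq_or_eq_neg_inv_of_mul_self_eq {K : Type*} [Field K] {q c : K} (hq : q ≠ 0)
    (h : c * c = (q - q⁻¹) * c + 1) : c = q ∨ c = -q⁻¹ := by
  have : (c - q) * (c + q⁻¹) = 0 := by
    linear_combination h - mul_inv_cancel₀ hq
  rcases mul_eq_zero.mp this with h | h
  · exact Or.inl (sub_eq_zero.mp h)
  · exact Or.inr (eq_neg_of_add_eq_zero_left h)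

theorem stmt_5_general (K : Type*) [Field K] [IsAlgClosed K] (q : K) (hq : q ≠ 0)
    (V : Type*) [AddCommGroup V] [Module K V] [FiniteDimensional K V]
    (X₁ X₂ T : Module.End K V)
    (hcomm : X₁ * X₂ = X₂ * X₁) (h1 : T * X₁ * T = X₂)
    (h2 : T * T = (q - q⁻¹) • T + 1)
    (μ : K) (hμ : Module.End.HasEigenvalue X₂ μ) :
    ∃ lam : K, Module.End.HasEigenvalue X₁ lam ∧
      (μ = lam ∨ μ = q ^ 2 * lam ∨ μ = q⁻¹ ^ 2 * lam) := by
  obtain ⟨lam, v, hv₁, hv₂⟩ := exists_hasEigenvector_of_commute hcomm hμ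
  have hlam := hasEigenvalue_of_hasEigenvector hv₁
  by_cases hμlam : μ = lam
  · exact ⟨lam, hlam, Or.inl hμlam⟩
  rcases hasEigenvalue_or_exists_eq_smul hv₁.apply_eq_smul
      (apply_apply_eq_of_hecke h1 h2 hv₂.apply_eq_smul) hμlam with hμ₁ | ⟨c, hTv⟩
  · exact ⟨μ, hμ₁, Or.inl rfl⟩
  have hμc := eq_sq_mul_of_apply_eq_smul h1 hv₁.2 hTv hv₁.apply_eq_smul hv₂.apply_eq_smul
  rcases eq_or_eq_neg_inv_of_mul_self_eq hq (mul_self_eq_of_apply_eq_smul h2 hv₁.2 hTv)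
    with rfl | rfl
  · exact ⟨lam, hlam, Or.inr (Or.inl hμc)⟩
  · exact ⟨lam, hlam, Or.inr (Or.inr (by rw [hμc, neg_sq]))⟩

/-- Let `K` be an algebraically closed field, `q ∈ K` with `q ≠ 0` and `q² ≠ 1`,
and set `z = q − q⁻¹`. Let `V` be a nonzero finite-dimensional `K`-vector space and
`X₁, X₂, T ∈ End(V)` with `X₁∘X₂ = X₂∘X₁`, `T∘X₁∘T = X₂`, and `T∘T = z·T + id`. Then every
eigenvalue of `X₂` on `V` is of the form `λ`, `q²λ`, or `q⁻²λ` for some eigenvalue `λ` of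
`X₁` on `V`. -/
theorem stmt_5 (K : Type*) [Field K] [IsAlgClosed K] (q : K) (hq : q ≠ 0)
    (hq2 : q ^ 2 ≠ 1)
    (V : Type*) [AddCommGroup V] [Module K V] [FiniteDimensional K V] [Nontrivial V]
    (X₁ X₂ T : Module.End K V)
    (hcomm : X₁ * X₂ = X₂ * X₁) (h1 : T * X₁ * T = X₂)
    (h2 : T * T = (q - q⁻¹) • T + 1)
    (μ : K) (hμ : Module.End.HasEigenvalue X₂ μ) :
    ∃ lam : K, Module.End.HasEigenvalue X₁ lam ∧
      (μ = lam ∨ μ = q ^ 2 * lam ∨ μ = q⁻¹ ^ 2 * lam) :=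
  stmt_5_general K q hq V X₁ X₂ T hcomm h1 h2 μ hμ
end

section
/- Let R be a commutative ring and n ≥ 0. In the ring of symmetric polynomials in variables x₁,…,x_N over R, the complete homogeneous symmetric polynomial h_n equals the determinant of the n×n matrix whose (i,j) entry is e_{i−j+1}, where e_k denotes the k-th elementary symmetric polynomial with the conventions e₀ = 1 and e_k = 0 for k < 0 or k > N. -/
/-!
In `A⟦t⟧` with `A = R[x₁, …, x_N]`, the series `E(t) = ∏ (1 - xᵢ t) = ∑ (-1)ᵏ eₖ tᵏ` and
`H(t) = ∏ 1 / (1 - xᵢ t) = ∑ hₖ tᵏ` satisfy `E H = 1`. Truncating modulo `t ^ (n + 1)` turns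
power series into lower triangular Toeplitz matrices multiplicatively, so the Toeplitz matrix of
`H` is the inverse, i.e. the adjugate, of the unitriangular Toeplitz matrix of `E`. Its corner
entry `hₙ` is therefore a cofactor: `(-1)ⁿ` times the Hessenberg determinant in the
`(-1)ᵏ eₖ`, and conjugating by `diag((-1)ⁱ)` removes all signs.
-/

open Finset PowerSeries Matrix

theorem neg_one_pow_sub_eq_neg_one_pow_add {R : Type*} [Monoid R] [HasDistribNeg R] {a b : ℕ}
    (h : b ≤ a) : (-1 : R) ^ (a - b) = (-1) ^ (a + b) := by
  obtain ⟨k, rfl⟩ := Nat.exists_eq_add_of_le h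
  rw [Nat.add_sub_cancel_left, show b + k + b = k + 2 * b by ring, pow_add, pow_mul, neg_one_sq,
    one_pow, mul_one]

namespace Matrix

variable {R : Type*} [CommRing R] {n : ℕ}

theorem det_of_neg_one_pow_add_mul (M : Matrix (Fin n) (Fin n) R) :
    det (of fun i j : Fin n => (-1) ^ ((i : ℕ) + j) * M i j) = det M := by
  have h := det_mul_column (fun i : Fin n => (-1 : R) ^ (i : ℕ))
    (of fun i j => (-1) ^ (j : ℕ) * M i j)
  simp only [of_apply, det_mul_row] at h
  simp_rw [pow_add, mul_assoc, h, ← mul_assoc, ← prod_mul_distrib, ← mul_pow, neg_one_mul,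
    neg_neg, one_pow, prod_const_one, one_mul]

theorem det_of_neg_one_pow_sub_mul_ite (a : ℕ → R) :
    det (of fun i j : Fin n => if (j : ℕ) ≤ (i : ℕ) + 1 then
        (-1) ^ ((i : ℕ) + 1 - j) * a ((i : ℕ) + 1 - j) else 0) =
      (-1) ^ n * det (of fun i j : Fin n =>
        if (j : ℕ) ≤ (i : ℕ) + 1 then a ((i : ℕ) + 1 - j) else 0) := by
  set T := of fun i j : Fin n => if (j : ℕ) ≤ (i : ℕ) + 1 then a ((i : ℕ) + 1 - j) else 0
  have hneg := det_neg (of fun i j : Fin n => (-1) ^ ((i : ℕ) + j) * T i j)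
  rw [Fintype.card_fin, det_of_neg_one_pow_add_mul] at hneg
  rw [← hneg]
  congr 1
  ext i j
  simp only [T, of_apply, neg_apply]
  split_ifs with hj
  · rw [neg_one_pow_sub_eq_neg_one_pow_add hj, add_right_comm, pow_succ]
    ring
  · simp

end Matrix

namespace PowerSeries

variable {A : Type*} [CommRing A]

/-- The matrix of multiplication by `f` on `A⟦X⟧ ⧸ (X ^ m)` in the basis `1, X, …, X ^ (m - 1)`. -/
noncomputable def lowerToeplitz (m : ℕ) (f : A⟦X⟧) : Matrix (Fin m) (Fin m) A :=
  of fun i j => if (j : ℕ) ≤ i then coeff ((i : ℕ) - j) f else 0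

theorem lowerToeplitz_mul (m : ℕ) (f g : A⟦X⟧) :
    lowerToeplitz m f * lowerToeplitz m g = lowerToeplitz m (f * g) := by
  ext i j
  simp only [lowerToeplitz, mul_apply, of_apply, ite_zero_mul_ite_zero, ← sum_filter]
  split_ifs with hji
  · rw [coeff_mul]
    refine sum_bij' (fun k _ => ((i : ℕ) - k, (k : ℕ) - j))
      (fun p hp => ⟨j + p.2, by have := HasAntidiagonal.mem_antidiagonal.1 hp; omega⟩)
      ?_ ?_ ?_ ?_ fun _ _ => rfl
    · intro k hk
      have := (mem_filter.1 hk).2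
      exact HasAntidiagonal.mem_antidiagonal.2 (by dsimp only; omega)
    · intro p hp
      have := HasAntidiagonal.mem_antidiagonal.1 hp
      simp only [mem_filter, mem_univ, true_and]
      omega
    · intro k hk
      have := (mem_filter.1 hk).2
      exact Fin.ext (by dsimp only; omega)
    · intro p hp
      have := HasAntidiagonal.mem_antidiagonal.1 hp
      ext <;> dsimp only <;> omega
  · exact sum_eq_zero fun k hk => absurd (mem_filter.1 hk).2 (by omega)

theorem lowerToeplitz_one (m : ℕ) : lowerToeplitz m (1 : A⟦X⟧) = 1 := by
  ext i j
  simp only [lowerToeplitz, of_apply, coeff_one, one_apply, Fin.ext_iff]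
  split_ifs <;> first | rfl | omega

theorem det_lowerToeplitz (m : ℕ) (f : A⟦X⟧) :
    (lowerToeplitz m f).det = constantCoeff f ^ m := by
  have : (lowerToeplitz m f).IsLowerTriangular := fun i j hij =>
    if_neg (Nat.not_le.2 (OrderDual.toDual_lt_toDual.1 hij))
  rw [det_of_isLowerTriangular _ this]
  simp [lowerToeplitz]

theorem coeff_eq_neg_one_pow_mul_det_of_mul_eq_one {f g : A⟦X⟧} (hfg : f * g = 1)
    (hf : constantCoeff f = 1) (n : ℕ) :
    coeff n g = (-1) ^ n * det (of fun i j : Fin n =>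
      if (j : ℕ) ≤ (i : ℕ) + 1 then coeff ((i : ℕ) + 1 - j) f else 0) := by
  set L := lowerToeplitz (n + 1) f
  have hU : lowerToeplitz (n + 1) g = L.adjugate := by
    have hLU : L * lowerToeplitz (n + 1) g = 1 := by
      rw [lowerToeplitz_mul, hfg, lowerToeplitz_one]
    rw [← inv_eq_right_inv hLU, Matrix.inv_def, det_lowerToeplitz, hf, one_pow,
      Ring.inverse_one, one_smul]
  calc coeff n g = lowerToeplitz (n + 1) g (Fin.last n) 0 := by simp [lowerToeplitz]
    _ = (-1) ^ n * det (L.submatrix Fin.succ Fin.castSucc) := by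
      rw [hU, adjugate_fin_succ_eq_det_submatrix]
      simp
    _ = _ := rfl

theorem one_sub_C_mul_X_mul_mk_pow (a : A) : (1 - C a * X) * mk (a ^ ·) = 1 := by
  have := congrArg (rescale a) (mk_one_mul_one_sub_eq_one (S := A))
  rw [map_mul, rescale_mk, map_sub, map_one, rescale_X, mul_comm] at this
  simpa using this

end PowerSeries

namespace MvPolynomial

variable (σ R : Type*) [CommRing R] [Fintype σ]

theorem prod_one_sub_C_X_mul_X_eq_mk_esymm :
    ∏ i, (1 - PowerSeries.C (X i : MvPolynomial σ R) * PowerSeries.X) =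
      PowerSeries.mk fun k => (-1) ^ k * esymm σ R k := by
  classical
  have hterm (t : Finset σ) :
      ∏ i ∈ t, -(PowerSeries.C (X i : MvPolynomial σ R) * PowerSeries.X) =
        PowerSeries.C ((-1) ^ #t * ∏ i ∈ t, X i) * PowerSeries.X ^ #t := by
    rw [prod_neg, prod_mul_distrib, prod_const, ← map_prod, map_mul, map_pow, map_neg, map_one]
    ring
  refine PowerSeries.ext fun k => ?_
  simp_rw [sub_eq_add_neg, prod_one_add, hterm, map_sum, coeff_C_mul_X_pow, coeff_mk, esymm,
    powersetCard_eq_filter, sum_filter, mul_sum]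
  exact sum_congr rfl fun t _ => by split_ifs <;> grind

theorem prod_mk_X_pow_eq_mk_hsymm [DecidableEq σ] :
    ∏ i, PowerSeries.mk (X i ^ · : ℕ → MvPolynomial σ R) = PowerSeries.mk (hsymm σ R) := by
  refine PowerSeries.ext fun n => ?_
  rw [coeff_mk, coeff_prod, hsymm]
  simp only [coeff_mk]
  symm
  refine sum_bij' (fun s _ => Multiset.toFinsupp (s : Multiset σ))
    (fun l hl => ⟨Finsupp.toMultiset l, ?_⟩) ?_ (fun _ _ => mem_univ _) ?_ ?_ ?_
  · rw [Finsupp.card_toMultiset, Finsupp.sum_fintype _ _ (by simp)]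
    exact (mem_finsuppAntidiag.1 hl).1
  · intro s _
    refine mem_finsuppAntidiag.2 ⟨?_, subset_univ _⟩
    exact (Finsupp.sum_fintype _ (fun _ => id) fun _ => rfl).symm.trans
      ((Multiset.toFinsupp_sum_eq _).trans s.2)
  · intro s _
    ext i
    simp
  · intro l _
    simp
  · intro s _
    simp only [Multiset.toFinsupp_apply]
    rw [Finset.prod_multiset_map_count]
    exact prod_subset (subset_univ _) fun i _ hi => by
      rw [Multiset.count_eq_zero_of_notMem (by simpa using hi), pow_zero]

theorem mk_esymm_mul_mk_hsymm [DecidableEq σ] :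
    PowerSeries.mk (fun k => (-1) ^ k * esymm σ R k) * PowerSeries.mk (hsymm σ R) = 1 := by
  rw [← prod_one_sub_C_X_mul_X_eq_mk_esymm, ← prod_mk_X_pow_eq_mk_hsymm, ← prod_mul_distrib]
  exact prod_eq_one fun i _ => one_sub_C_mul_X_mul_mk_pow _

end MvPolynomial

/-- Let `R` be a commutative ring and `n ≥ 0`. In the ring of symmetric
polynomials in variables `x₁,…,x_N` over `R`, the complete homogeneous symmetric polynomial
`h_n` equals the determinant of the `n×n` matrix whose `(i,j)` entry is `e_{i−j+1}` (indices
`i, j` running over `1,…,n`), where `e_k` denotes the `k`-th elementary symmetric polynomial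
with the conventions `e₀ = 1` and `e_k = 0` for `k < 0` or `k > N`.
(Here `i, j : Fin n` are 0-based, so the entry index `i − j + 1` becomes `(i+1) − (j+1) + 1`;
it is negative exactly when `(j : ℕ) > (i : ℕ) + 1`, in which case the entry is `0`.) -/
theorem stmt_8 (R : Type*) [CommRing R] (N : ℕ) (n : ℕ) :
    MvPolynomial.hsymm (Fin N) R n =
      Matrix.det (Matrix.of fun i j : Fin n =>
        if (j : ℕ) ≤ (i : ℕ) + 1 then
          MvPolynomial.esymm (Fin N) R ((i : ℕ) + 1 - (j : ℕ))
        else 0) := by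
  have h := coeff_eq_neg_one_pow_mul_det_of_mul_eq_one
    (MvPolynomial.mk_esymm_mul_mk_hsymm (Fin N) R) (by simp) n
  simp only [coeff_mk] at h
  rw [h, det_of_neg_one_pow_sub_mul_ite, ← mul_assoc, ← pow_add, Even.neg_one_pow ⟨n, rfl⟩,
    one_mul]
end

section
/- Let R be a commutative ring, a ∈ R a unit, and for m ≥ 0 and n ≥ 0 define the modified complete symmetric polynomial h̃_m(x₁,…,x_n) = ∑_{1≤i₁≤…≤i_m≤n} a^{|{i₁,…,i_m}|−1} x_{i₁}⋯x_{i_m} (so h̃₀ = a⁻¹, and h̃_m(x₁,…,x₀) = 0 for m > 0). Then for all n ≥ 1 and m ≥ 0: h̃_m(x₁,…,x_n) = h̃_m(x₁,…,x_{n−1}) + a·∑_{r=1}^{m} h̃_{m−r}(x₁,…,x_{n−1})·x_nʳ. -/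
/-- The modified complete symmetric polynomial
`h̃_m(x₁,…,x_n) = ∑_{1≤i₁≤…≤i_m≤n} a^{|{i₁,…,i_m}|−1} x_{i₁}⋯x_{i_m}` of the paper,
where `a` is a unit of the commutative ring `R`, `|{i₁,…,i_m}|` is the number of distinct
values among `i₁,…,i_m`, and the variables are `x 0, …, x (n-1)` (so `h̃₀ = a⁻¹`, and
`h̃_m = 0` for `m > 0` but `n = 0`). Weakly increasing sequences `i₁ ≤ … ≤ i_m` of elements
of `{0,…,n-1}` are identified with multisets of size `m` on `{0,…,n-1}`. -/
noncomputable def htilde {R : Type*} [CommRing R] (a : Rˣ) (x : ℕ → R) (m n : ℕ) : R :=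
  ∑ μ ∈ (Finset.range n).sym m,
    ((a ^ ((μ.1.toFinset.card : ℤ) - 1) : Rˣ) : R) * (μ.1.map x).prod

/-! Split the multisets on `{0,…,n-1}` according to the multiplicity `r` of the last index
`n-1`. Removing those `r` copies leaves a multiset of size `m-r` on `{0,…,n-2}`; for `r ≥ 1`
this lowers the number of distinct values by exactly one, so the weight loses the factor
`a·x_{n-1}^r`. -/

open Finset

theorem Finset.sum_sym_insert {α M : Type*} [DecidableEq α] [AddCommMonoid M] {s : Finset α}
    {b : α} (hb : b ∉ s) (m : ℕ) (f : Sym α m → M) :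
    ∑ μ ∈ (insert b s).sym m, f μ = ∑ i : Fin (m + 1), ∑ ν ∈ s.sym (m - i), f (ν.fill b i) := by
  rw [← sum_coe_sort, Fintype.sum_equiv (symInsertEquiv hb) _ (fun σ => f (σ.2.1.fill b σ.1))
    fun μ => congrArg f (Sym.fill_filterNe b μ.1).symm, Fintype.sum_sigma]
  exact Fintype.sum_congr _ _ fun i => sum_coe_sort (s.sym (m - i)) (fun ν => f (ν.fill b i))

section Weight

variable {α R : Type*} [DecidableEq α] [CommRing R] (a : Rˣ) (x : α → R)

noncomputable def htildeWeight (μ : Multiset α) : R :=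
  ((a ^ ((μ.toFinset.card : ℤ) - 1) : Rˣ) : R) * (μ.map x).prod

theorem htildeWeight_add_replicate {ν : Multiset α} {b : α} (hb : b ∉ ν) {i : ℕ} (hi : i ≠ 0) :
    htildeWeight a x (ν + Multiset.replicate i b) = a * (htildeWeight a x ν * x b ^ i) := by
  have hcard : (ν + Multiset.replicate i b).toFinset.card = ν.toFinset.card + 1 := by
    rw [Multiset.toFinset_add, Multiset.toFinset_replicate, if_neg hi, union_comm,
      ← insert_eq, card_insert_of_notMem (by simpa using hb)]
  rw [htildeWeight, htildeWeight, hcard, Multiset.map_add, Multiset.prod_add,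
    Multiset.map_replicate, Multiset.prod_replicate, Nat.cast_succ, add_sub_right_comm,
    zpow_add_one, Units.val_mul]
  ring

end Weight

theorem htilde_eq_sum_htildeWeight {R : Type*} [CommRing R] (a : Rˣ) (x : ℕ → R) (m n : ℕ) :
    htilde a x m n = ∑ μ ∈ (range n).sym m, htildeWeight a x (μ : Multiset ℕ) :=
  rfl

theorem htilde_succ {R : Type*} [CommRing R] (a : Rˣ) (x : ℕ → R) (m k : ℕ) :
    htilde a x m (k + 1) =
      htilde a x m k + (a : R) * ∑ r ∈ Icc 1 m, htilde a x (m - r) k * x k ^ r := by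
  have hk : k ∉ range k := notMem_range_self
  have fill_sum (i : Fin (m + 1)) :
      ∑ ν ∈ (range k).sym (m - i), htildeWeight a x (ν.fill k i : Multiset ℕ) =
        if (i : ℕ) = 0 then htilde a x (m - i) k
        else a * (htilde a x (m - i) k * x k ^ (i : ℕ)) := by
    split_ifs with hi
    · refine sum_congr rfl fun ν _ => ?_
      simp only [Sym.coe_fill, Sym.coe_replicate, hi, Multiset.replicate_zero, add_zero]
      rfl
    · rw [htilde_eq_sum_htildeWeight, sum_mul, mul_sum]
      refine sum_congr rfl fun ν hν => ?_
      exact htildeWeight_add_replicate a x (fun h => hk (mem_sym_iff.1 hν k h)) hi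
  rw [htilde_eq_sum_htildeWeight, range_add_one, sum_sym_insert hk,
    Fintype.sum_congr _ _ fill_sum,
    Fin.sum_univ_eq_sum_range (fun r => if r = 0 then htilde a x (m - r) k
        else a * (htilde a x (m - r) k * x k ^ r)),
    range_eq_Ico, sum_eq_sum_Ico_succ_bot m.add_one_pos, zero_add, Ico_add_one_right_eq_Icc,
    if_pos rfl, Nat.sub_zero, mul_sum]
  congr 1
  exact sum_congr rfl fun r hr => if_neg (by grind)

/-- Let `R` be a commutative ring, `a ∈ R` a unit, and `h̃_m` the modified
complete symmetric polynomial as above. Then for all `n ≥ 1` and `m ≥ 0`: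
`h̃_m(x₁,…,x_n) = h̃_m(x₁,…,x_{n−1}) + a·∑_{r=1}^{m} h̃_{m−r}(x₁,…,x_{n−1})·x_nʳ`. -/
theorem stmt_9 (R : Type*) [CommRing R] (a : Rˣ) (x : ℕ → R) (m n : ℕ) (hn : 1 ≤ n) :
    htilde a x m n =
      htilde a x m (n - 1)
        + (a : R) * ∑ r ∈ Finset.Icc 1 m, htilde a x (m - r) (n - 1) * x (n - 1) ^ r := by
  obtain ⟨k, rfl⟩ := Nat.exists_eq_add_of_le' hn
  exact htilde_succ a x m k
end

section
/- Let R be a commutative ring, a ∈ R a unit, and h̃_m(x₁,…,x_n) = ∑_{1≤i₁≤…≤i_m≤n} a^{|{i₁,…,i_m}|−1} x_{i₁}⋯x_{i_m} (with h̃₀ = a⁻¹). Then in the formal power series ring R[x₁,…,x_n]⟦t⟧ one has the generating function identity: ∑_{m≥0} h̃_m(x₁,…,x_n)·tᵐ = a⁻¹·∏_{i=1}^{n} (1 − (1−a)·x_i·t)·(1 − x_i·t)⁻¹. -/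
open PowerSeries Finset

theorem Finset.sum_sym_eq_sum_finsuppAntidiag {ι M : Type*} [DecidableEq ι] [AddCommMonoid M]
    (s : Finset ι) (m : ℕ) (g : Multiset ι → M) :
    ∑ μ ∈ s.sym m, g μ.1 = ∑ f ∈ s.finsuppAntidiag m, g (Finsupp.toMultiset f) := by
  refine sum_bij' (fun μ _ => Multiset.toFinsupp μ.1)
    (fun f hf => ⟨Finsupp.toMultiset f, by
      rw [Finsupp.card_toMultiset]; exact (mem_finsuppAntidiag'.1 hf).1⟩)
    (fun μ hμ => ?_) (fun f hf => ?_) (fun μ _ => ?_) (fun f _ => ?_) (fun μ _ => ?_)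
  · rw [mem_finsuppAntidiag', Multiset.toFinsupp_support]
    exact ⟨(Multiset.toFinsupp_sum_eq _).trans μ.2,
      fun i hi => mem_sym_iff.1 hμ i (Multiset.mem_toFinset.1 hi)⟩
  · exact mem_sym_iff.2 fun i hi =>
      (mem_finsuppAntidiag.1 hf).2 (Finsupp.mem_toMultiset f i |>.1 hi)
  · exact Sym.ext (Multiset.toFinsupp_toMultiset μ.1)
  · exact Finsupp.toMultiset_toFinsupp f
  · rw [Multiset.toFinsupp_toMultiset]

theorem Finsupp.prod_map_toMultiset {ι M : Type*} [CommMonoid M] (f : ι →₀ ℕ) (x : ι → M) :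
    (f.toMultiset.map x).prod = f.prod fun i k => x i ^ k := by
  classical
  rw [Finset.prod_multiset_map_count, Finsupp.toFinset_toMultiset]
  simp [Finsupp.prod]

theorem PowerSeries.mk_ite_mul_one_sub {R : Type*} [CommRing R] (a c : R) :
    mk (fun m => if m = 0 then 1 else a * c ^ m) * (1 - C c * X) = 1 - C ((1 - a) * c) * X := by
  ext (_ | m)
  · simp
  · rw [mul_sub, mul_one, ← mul_assoc, mul_comm _ (C c), mul_assoc, map_sub, coeff_C_mul,
      coeff_succ_mul_X]
    rcases m with _ | m <;> simp [pow_succ] <;> ring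

theorem PowerSeries.one_sub_mul_invOfUnit_one_sub {R : Type*} [CommRing R] (a c : R) :
    (1 - C ((1 - a) * c) * X) * invOfUnit (1 - C c * X) 1 =
      mk fun m => if m = 0 then 1 else a * c ^ m := by
  rw [← mk_ite_mul_one_sub, mul_assoc, mul_invOfUnit _ _ (by simp), mul_one]

theorem Finsupp.prod_ite_mul_pow_eq_pow_card_mul_prod {ι M : Type*} [CommMonoid M] {t : Finset ι}
    (f : ι →₀ ℕ) (hf : f.support ⊆ t) (a : M) (x : ι → M) :
    ∏ i ∈ t, (if f i = 0 then 1 else a * x i ^ f i) =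
      a ^ #f.support * f.prod fun i k => x i ^ k := by
  rw [← prod_subset hf fun i _ hi => by simp [Finsupp.notMem_support_iff.1 hi],
    Finset.prod_congr rfl fun i hi => if_neg (Finsupp.mem_support_iff.1 hi), prod_mul_distrib,
    prod_const, Finsupp.prod]

/-- the generating function identity
`∑_{m≥0} h̃_m(x₁,…,x_n)·tᵐ = a⁻¹·∏_{i=1}^{n} (1 − (1−a)·x_i·t)·(1 − x_i·t)⁻¹`
in the formal power series ring `R⟦t⟧`. The inverse `(1 − x_i·t)⁻¹` is
`PowerSeries.invOfUnit (1 - C (x i) * X) 1`, the inverse of the power series `1 − x_i·t`,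
whose constant coefficient is the unit `1`. -/
theorem stmt_11 (R : Type*) [CommRing R] (a : Rˣ) (x : ℕ → R) (n : ℕ) :
    PowerSeries.mk (fun m => htilde a x m n) =
      PowerSeries.C (R := R) ((a⁻¹ : Rˣ) : R) *
        ∏ i ∈ Finset.range n,
          (1 - PowerSeries.C (R := R) ((1 - (a : R)) * x i) * PowerSeries.X) *
            PowerSeries.invOfUnit (1 - PowerSeries.C (R := R) (x i) * PowerSeries.X) 1 := by
  ext m
  simp only [one_sub_mul_invOfUnit_one_sub, coeff_mk, coeff_C_mul, coeff_prod, mul_sum]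
  rw [htilde, sum_sym_eq_sum_finsuppAntidiag (g := fun μ =>
    ((a ^ ((μ.toFinset.card : ℤ) - 1) : Rˣ) : R) * (μ.map x).prod)]
  refine sum_congr rfl fun f hf => ?_
  rw [Finsupp.prod_ite_mul_pow_eq_pow_card_mul_prod f (mem_finsuppAntidiag.1 hf).2,
    Finsupp.prod_map_toMultiset, Finsupp.toFinset_toMultiset, zpow_sub_one, zpow_natCast,
    Units.val_mul, Units.val_pow_eq_pow_val, mul_comm ((a : R) ^ _), mul_assoc]
end

section
/- Let R be a commutative ring, a ∈ R, and m ≥ 1, n ≥ 0. Then ∑_{1≤i₁≤…≤i_m≤n} a^{|{i₁,…,i_m}|−1} x_{i₁}⋯x_{i_m} = ∑_{λ} a^{ℓ(λ)−1} m_λ(x₁,…,x_n), where the right-hand sum is over all partitions λ of m with at most n parts, ℓ(λ) is the number of (nonzero) parts of λ, and m_λ is the monomial symmetric polynomial associated to λ. -/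
/-!
Group the monomials `x_{i₁} ⋯ x_{i_m}` by the partition of `m` formed by the multiplicities of
their indices: the fibre over `λ` sums to `m_λ`, and the number of distinct indices of every
monomial in that fibre is `ℓ(λ)`, so the weight `a^{|{i₁,…,i_m}|−1}` is constant on it.
-/

open Finset MvPolynomial

theorem Nat.Partition.card_parts_ofSym {σ : Type*} [DecidableEq σ] {n : ℕ} (s : Sym σ n) :
    (ofSym s).parts.card = s.1.toFinset.card := by
  simp [ofSym, Multiset.toFinset]

theorem Nat.Partition.card_parts_ofSym_le_card {σ : Type*} [Fintype σ] [DecidableEq σ] {n : ℕ}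
    (s : Sym σ n) : (ofSym s).parts.card ≤ Fintype.card σ := by
  rw [card_parts_ofSym]
  exact card_le_univ _

namespace MvPolynomial

variable {σ R : Type*} [Fintype σ] [DecidableEq σ] [CommSemiring R] {m : ℕ}

theorem sum_sym_C_mul_prod_X_eq_sum_C_mul_msymm (f : Nat.Partition m → R) :
    ∑ s : Sym σ m, C (f (.ofSym s)) * (s.1.map X).prod
      = ∑ μ ∈ univ.filter (fun μ : Nat.Partition m => μ.parts.card ≤ Fintype.card σ),
          C (f μ) * msymm σ R μ := by
  rw [← sum_fiberwise_of_maps_to (g := fun s : Sym σ m => Nat.Partition.ofSym s)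
    (t := univ.filter fun μ : Nat.Partition m => μ.parts.card ≤ Fintype.card σ)
    fun s _ => mem_filter.2 ⟨mem_univ _, Nat.Partition.card_parts_ofSym_le_card s⟩]
  refine sum_congr rfl fun μ _ => ?_
  rw [msymm, mul_sum,
    sum_subtype (p := fun s : Sym σ m => Nat.Partition.ofSym s = μ) _ fun s => by simp]
  exact Fintype.sum_congr _ _ fun s => by rw [s.2]

end MvPolynomial

theorem stmt_12_general (R : Type*) [CommRing R] (a : R) (m n : ℕ) :
    ∑ μ : Sym (Fin n) m,
        MvPolynomial.C (a ^ (μ.1.toFinset.card - 1)) * (μ.1.map MvPolynomial.X).prod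
      = ∑ lam ∈ Finset.univ.filter (fun lam : Nat.Partition m => lam.parts.card ≤ n),
          MvPolynomial.C (a ^ (lam.parts.card - 1)) * MvPolynomial.msymm (Fin n) R lam := by
  simpa only [Nat.Partition.card_parts_ofSym, Fintype.card_fin] using
    sum_sym_C_mul_prod_X_eq_sum_C_mul_msymm (σ := Fin n)
      fun μ : Nat.Partition m => a ^ (μ.parts.card - 1)

/-- Let `R` be a commutative ring, `a ∈ R`, and `m ≥ 1`, `n ≥ 0`. Then
`∑_{1≤i₁≤…≤i_m≤n} a^{|{i₁,…,i_m}|−1} x_{i₁}⋯x_{i_m} = ∑_{λ} a^{ℓ(λ)−1} m_λ(x₁,…,x_n)`,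
where the right-hand sum is over all partitions `λ` of `m` with at most `n` parts, `ℓ(λ)` is
the number of (nonzero) parts of `λ`, and `m_λ` is the monomial symmetric polynomial
associated to `λ`. Here we work in the polynomial ring `MvPolynomial (Fin n) R` with the `n`
variables `X 0, …, X (n-1)`; a weakly increasing sequence `i₁ ≤ … ≤ i_m` corresponds to a
multiset `μ : Sym (Fin n) m`, with `|{i₁,…,i_m}|` the number of distinct entries. -/
theorem stmt_12 (R : Type*) [CommRing R] (a : R) (m n : ℕ) (hm : 1 ≤ m) :
    ∑ μ : Sym (Fin n) m,
        MvPolynomial.C (a ^ (μ.1.toFinset.card - 1)) * (μ.1.map MvPolynomial.X).prod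
      = ∑ lam ∈ Finset.univ.filter (fun lam : Nat.Partition m => lam.parts.card ≤ n),
          MvPolynomial.C (a ^ (lam.parts.card - 1)) * MvPolynomial.msymm (Fin n) R lam :=
  stmt_12_general R a m n
end

section
/- Let K be a field, q ∈ K×, z = q − q⁻¹, V = Kⁿ with basis v₁,…,v_n, and let T ∈ End(V⊗V) be defined by T(v_i⊗v_j) = v_j⊗v_i if i < j, T(v_i⊗v_i) = q·v_i⊗v_i, and T(v_i⊗v_j) = v_j⊗v_i + z·v_i⊗v_j if i > j. Then the braid relation holds on V⊗V⊗V: (T⊗id_V)∘(id_V⊗T)∘(T⊗id_V) = (id_V⊗T)∘(T⊗id_V)∘(id_V⊗T). -/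
/-!
Both sides of the braid relation are evaluated on the basis vectors `b i ⊗ b j ⊗ b k` of
`(M ⊗ M) ⊗ M`, case by case on the relative order of `i`, `j`, `k`. When the three indices are
distinct, `q` never appears and the two sides agree term by term; when two of them coincide, the
comparison of coefficients reduces to the quadratic relation `q ^ 2 = z * q + 1`, which for
`z = q - q⁻¹` holds as soon as `q` is invertible.
-/

open TensorProduct

section

variable {R M ι : Type*} [CommRing R] [AddCommGroup M] [Module R M] [LinearOrder ι]

structure IsStandardRMatrix (b : Module.Basis ι R M) (q z : R) (T : M ⊗[R] M →ₗ[R] M ⊗[R] M) :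
    Prop where
  apply_of_lt {i j : ι} : i < j → T (b i ⊗ₜ b j) = b j ⊗ₜ b i
  apply_self (i : ι) : T (b i ⊗ₜ b i) = q • (b i ⊗ₜ b i)
  apply_of_gt {i j : ι} : j < i → T (b i ⊗ₜ b j) = b j ⊗ₜ b i + z • (b i ⊗ₜ b j)

namespace LinearMap

variable (M) in
def lTensorAssoc (T : M ⊗[R] M →ₗ[R] M ⊗[R] M) : (M ⊗[R] M) ⊗[R] M →ₗ[R] (M ⊗[R] M) ⊗[R] M :=
  (TensorProduct.assoc R M M M).symm.toLinearMap ∘ₗ T.lTensor M ∘ₗ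
    (TensorProduct.assoc R M M M).toLinearMap

@[simp]
theorem lTensorAssoc_tmul (T : M ⊗[R] M →ₗ[R] M ⊗[R] M) (x y w : M) :
    lTensorAssoc M T (x ⊗ₜ y ⊗ₜ w) = (TensorProduct.assoc R M M M).symm (x ⊗ₜ T (y ⊗ₜ w)) := by
  simp [lTensorAssoc]

end LinearMap

open LinearMap in
theorem IsStandardRMatrix.braid {b : Module.Basis ι R M} {q z : R}
    {T : M ⊗[R] M →ₗ[R] M ⊗[R] M} (hT : IsStandardRMatrix b q z T)
    (hqz : q ^ 2 = z * q + 1) :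
    T.rTensor M ∘ₗ lTensorAssoc M T ∘ₗ T.rTensor M =
      lTensorAssoc M T ∘ₗ T.rTensor M ∘ₗ lTensorAssoc M T := by
  refine (b.tensorProduct b).tensorProduct b |>.ext fun ⟨⟨i, j⟩, k⟩ => ?_
  simp only [Module.Basis.tensorProduct_apply]
  rcases lt_trichotomy i j with hij | hij | hij <;>
    rcases lt_trichotomy j k with hjk | hjk | hjk <;>
    rcases lt_trichotomy i k with hik | hik | hik <;>
    subst_vars <;>
    first
      | (exfalso; order)
      | (simp (disch := assumption) only [comp_apply, rTensor_tmul, lTensorAssoc_tmul,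
          assoc_symm_tmul, map_add, map_smul, tmul_add, add_tmul, tmul_smul, ← smul_tmul',
          smul_add, smul_smul, hT.apply_of_lt, hT.apply_self, hT.apply_of_gt]
         try match_scalars <;> grind)

end

/-- Let `K` be a field, `q ∈ K×`, `z = q − q⁻¹`, `V = Kⁿ` with basis
`v₁,…,v_n`, and let `T ∈ End(V⊗V)` be the R-matrix operator defined by
`T(v_i⊗v_j) = v_j⊗v_i` if `i < j`, `T(v_i⊗v_i) = q·v_i⊗v_i`, and
`T(v_i⊗v_j) = v_j⊗v_i + z·v_i⊗v_j` if `i > j`. Then the braid relation holds on `V⊗V⊗V`: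
`(T⊗id_V)∘(id_V⊗T)∘(T⊗id_V) = (id_V⊗T)∘(T⊗id_V)∘(id_V⊗T)`.
Here we work on `(V⊗V)⊗V`; the operator `id_V⊗T` is transported along the associator. -/
theorem stmt_14 (K : Type*) [Field K] (q : K) (hq : q ≠ 0) (n : ℕ)
    (T : TensorProduct K (Fin n → K) (Fin n → K) →ₗ[K]
          TensorProduct K (Fin n → K) (Fin n → K))
    (v : Fin n → (Fin n → K)) (hv : ∀ i, v i = Pi.single i 1)
    (hlt : ∀ i j : Fin n, i < j → T (v i ⊗ₜ[K] v j) = v j ⊗ₜ[K] v i)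
    (heq : ∀ i : Fin n, T (v i ⊗ₜ[K] v i) = q • (v i ⊗ₜ[K] v i))
    (hgt : ∀ i j : Fin n, j < i →
      T (v i ⊗ₜ[K] v j) = v j ⊗ₜ[K] v i + (q - q⁻¹) • (v i ⊗ₜ[K] v j)) :
    (LinearMap.rTensor (Fin n → K) T) ∘ₗ
        ((TensorProduct.assoc K (Fin n → K) (Fin n → K) (Fin n → K)).symm.toLinearMap ∘ₗ
          LinearMap.lTensor (Fin n → K) T ∘ₗ
          (TensorProduct.assoc K (Fin n → K) (Fin n → K) (Fin n → K)).toLinearMap) ∘ₗ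
        (LinearMap.rTensor (Fin n → K) T)
      = ((TensorProduct.assoc K (Fin n → K) (Fin n → K) (Fin n → K)).symm.toLinearMap ∘ₗ
          LinearMap.lTensor (Fin n → K) T ∘ₗ
          (TensorProduct.assoc K (Fin n → K) (Fin n → K) (Fin n → K)).toLinearMap) ∘ₗ
        (LinearMap.rTensor (Fin n → K) T) ∘ₗ
        ((TensorProduct.assoc K (Fin n → K) (Fin n → K) (Fin n → K)).symm.toLinearMap ∘ₗ
          LinearMap.lTensor (Fin n → K) T ∘ₗ
          (TensorProduct.assoc K (Fin n → K) (Fin n → K) (Fin n → K)).toLinearMap) := by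
  have hb (i : Fin n) : Pi.basisFun K (Fin n) i = v i := by simp [hv]
  have hT : IsStandardRMatrix (Pi.basisFun K (Fin n)) q (q - q⁻¹) T :=
    { apply_of_lt := fun h => by simpa only [hb] using hlt _ _ h
      apply_self := fun i => by simpa only [hb] using heq i
      apply_of_gt := fun h => by simpa only [hb] using hgt _ _ h }
  exact hT.braid (by field_simp; ring)
end
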